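/- Let q ∈ ℂ× and z₁, z₂ ∈ ℂ. Then the following four identities hold: z₁·R(q,q) + z₂·R'(q,q) = R_{ΓΓ}(z₁,z₂); (−q²z₁)·R(−q⁻¹,−q⁻¹) + (−q²z₂)·R'(−q⁻¹,−q⁻¹) = R_{ΔΔ}(z₁,z₂); z₁·R(q,−q⁻¹) + (−q²z₂)·R'(q,−q⁻¹) = R_{ΓΔ}(z₁,z₂); (−q²z₁)·R(−q⁻¹,q) + z₂·R'(−q⁻¹,q) = R_{ΔΓ}(z₁,z₂). That is, the baxterized R-matrices α·R(ζ,ζ') + β·R'(ζ,ζ') specialize to all four families of R-vertex weights of Tokuyama ice (deformation parameter v = q²). -/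

import Mathlib

open Matrix

/-- The endomorphism of `ℂ²⊗ℂ²` with Boltzmann weights `(a₁,a₂,b₁,b₂,c₁,c₂)`,
in the ordered basis `e₀⊗e₀, e₀⊗e₁, e₁⊗e₀, e₁⊗e₁` (columns are images of basis vectors). -/
def Mmat (a₁ a₂ b₁ b₂ c₁ c₂ : ℂ) : Matrix (Fin 4) (Fin 4) ℂ :=
  !![a₂, 0,  0,  0;
     0,  c₂, b₁, 0;
     0,  b₂, c₁, 0;
     0,  0,  0,  a₁]

/-- The R-matrix `R(ζ,ζ')`. -/
def Rmat (ζ ζ' : ℂ) : Matrix (Fin 4) (Fin 4) ℂ :=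
  Mmat (-(ζ * ζ')) 1 ζ' ζ (1 - ζ ^ 2) 0

/-- The R-matrix `R'(ζ,ζ')`. -/
def Rmat' (ζ ζ' : ℂ) : Matrix (Fin 4) (Fin 4) ℂ :=
  Mmat 1 (-(ζ * ζ')) (-ζ) (-ζ') 0 (1 - ζ' ^ 2)

/-- Γ Tokuyama T-weights (deformation parameter `v = q²`). -/
noncomputable def TG (q z : ℂ) : Matrix (Fin 4) (Fin 4) ℂ :=
  Mmat 1 z (-q) (q * z) ((1 - q ^ 2) * z) 1

/-- Δ Tokuyama T-weights (deformation parameter `v = q²`). -/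
noncomputable def TD (q z : ℂ) : Matrix (Fin 4) (Fin 4) ℂ :=
  Mmat 1 (-(q ^ 2 * z)) q⁻¹ (q * z) ((1 - q ^ 2) * z) 1

/-- ΓΓ Tokuyama R-weights. -/
noncomputable def RGG (q z₁ z₂ : ℂ) : Matrix (Fin 4) (Fin 4) ℂ :=
  Mmat (z₂ - q ^ 2 * z₁) (z₁ - q ^ 2 * z₂) (q * (z₁ - z₂)) (q * (z₁ - z₂))
    ((1 - q ^ 2) * z₁) ((1 - q ^ 2) * z₂)

/-- ΔΔ Tokuyama R-weights. -/
noncomputable def RDD (q z₁ z₂ : ℂ) : Matrix (Fin 4) (Fin 4) ℂ :=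
  Mmat (z₁ - q ^ 2 * z₂) (z₂ - q ^ 2 * z₁) (q * (z₁ - z₂)) (q * (z₁ - z₂))
    ((1 - q ^ 2) * z₁) ((1 - q ^ 2) * z₂)

/-- ΓΔ Tokuyama R-weights. -/
noncomputable def RGD (q z₁ z₂ : ℂ) : Matrix (Fin 4) (Fin 4) ℂ :=
  Mmat (z₁ - q ^ 2 * z₂) (z₁ - q ^ 2 * z₂) (q⁻¹ * (q ^ 4 * z₂ - z₁)) (q * (z₁ - z₂))
    ((1 - q ^ 2) * z₁) ((1 - q ^ 2) * z₂)

/-- ΔΓ Tokuyama R-weights. -/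
noncomputable def RDG (q z₁ z₂ : ℂ) : Matrix (Fin 4) (Fin 4) ℂ :=
  Mmat (z₂ - q ^ 2 * z₁) (z₂ - q ^ 2 * z₁) (q⁻¹ * (z₂ - q ^ 4 * z₁)) (q * (z₁ - z₂))
    ((1 - q ^ 2) * z₁) ((1 - q ^ 2) * z₂)

theorem Mmat_add_Mmat (a₁ a₂ b₁ b₂ c₁ c₂ a₁' a₂' b₁' b₂' c₁' c₂' : ℂ) :
    Mmat a₁ a₂ b₁ b₂ c₁ c₂ + Mmat a₁' a₂' b₁' b₂' c₁' c₂' =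
      Mmat (a₁ + a₁') (a₂ + a₂') (b₁ + b₁') (b₂ + b₂') (c₁ + c₁') (c₂ + c₂') := by
  simp only [Mmat, of_add_of, cons_add_cons, empty_add_empty, add_zero]

theorem smul_Mmat (t a₁ a₂ b₁ b₂ c₁ c₂ : ℂ) :
    t • Mmat a₁ a₂ b₁ b₂ c₁ c₂ =
      Mmat (t * a₁) (t * a₂) (t * b₁) (t * b₂) (t * c₁) (t * c₂) := by
  simp only [Mmat, smul_of, smul_cons, smul_empty, smul_eq_mul, mul_zero]

theorem smul_Rmat_add_smul_Rmat' (α β ζ ζ' : ℂ) :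
    α • Rmat ζ ζ' + β • Rmat' ζ ζ' =
      Mmat (β - α * (ζ * ζ')) (α - β * (ζ * ζ')) (α * ζ' - β * ζ) (α * ζ - β * ζ')
        (α * (1 - ζ ^ 2)) (β * (1 - ζ' ^ 2)) := by
  rw [Rmat, Rmat', smul_Mmat, smul_Mmat, Mmat_add_Mmat]
  congr 1 <;> ring

theorem stmt14 (q z₁ z₂ : ℂ) (hq : q ≠ 0) :
    z₁ • Rmat q q + z₂ • Rmat' q q = RGG q z₁ z₂ ∧
    (-(q ^ 2 * z₁)) • Rmat (-q⁻¹) (-q⁻¹) + (-(q ^ 2 * z₂)) • Rmat' (-q⁻¹) (-q⁻¹) = RDD q z₁ z₂ ∧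
    z₁ • Rmat q (-q⁻¹) + (-(q ^ 2 * z₂)) • Rmat' q (-q⁻¹) = RGD q z₁ z₂ ∧
    (-(q ^ 2 * z₁)) • Rmat (-q⁻¹) q + z₂ • Rmat' (-q⁻¹) q = RDG q z₁ z₂ := by
  simp only [smul_Rmat_add_smul_Rmat', RGG, RDD, RGD, RDG]
  refine ⟨?_, ?_, ?_, ?_⟩ <;> congr 1 <;> field_simp <;> ring
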